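/- Let G = (V,E) be a finite simple undirected graph with positive edge weights and unique shortest paths, let s, v, x, y be vertices with d_G(v,x) ≤ d_G(s,v), d_G(x,y) ≤ 2 · d_G(s,v), and d_G(y,s) ≤ 4 · d_G(s,v), and let f ∈ E be an edge such that s and v are connected in G − f, f lies on π(s,v), f lies on π(v,x), f does not lie on π(x,y), and f lies on π(y,s). Then d_{G−f}(v,x) + d_{G−f}(x,y) + d_{G−f}(y,s) ≤ 11 · d_{G−f}(s,v). (Case 6 in the proof of Lemma 4.1.) -/

import Mathlib

open scoped ENNReal

variable {V : Type*}

/-- The total weight of a walk: the sum of the weights of its edges (in `ℝ≥0∞`). -/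
noncomputable def walkWeight {G : SimpleGraph V} (wt : Sym2 V → NNReal)
    {u v : V} (p : G.Walk u v) : ℝ≥0∞ :=
  (p.edges.map (fun e => (wt e : ℝ≥0∞))).sum

/-- The weighted shortest-path distance: the infimum over all walks from `u` to `v`
of their total weight (in `ℝ≥0∞`, so it is `∞` if `u` and `v` are not connected). -/
noncomputable def wdist (G : SimpleGraph V) (wt : Sym2 V → NNReal) (u v : V) : ℝ≥0∞ :=
  ⨅ p : G.Walk u v, walkWeight wt p

/-- `G` has unique shortest paths: for every pair of connected vertices there is exactly
one walk of minimum total weight. -/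
def HasUniqueShortestPaths (G : SimpleGraph V) (wt : Sym2 V → NNReal) : Prop :=
  ∀ u v : V, G.Reachable u v →
    ∃! p : G.Walk u v, walkWeight wt p = wdist G wt u v

/-!
Write `D = d_G(s,v)` and `D' = d_{G-f}(s,v) ≥ D`, and let `f = s(a,b)` with `π(s,v)` running
`s → a → b → v`. The two pieces of `π(s,v)` avoid `f`, so going `a → s`, then along a
replacement path `s → v` in `G - f`, then `v → b`, gives `d_{G-f}(a,b) ≤ D + D'`.
A shortest path `π(u,z)` through `f` uses it only once, so replacing `f` by that detour gives
`d_{G-f}(u,z) ≤ d_G(u,z) + D + D'`. This bounds the three terms by `2D + D'`, `2D` (as `π(x,y)`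
avoids `f`) and `5D + D'`, and `9D + 2D' ≤ 11D'`.
-/

section

open SimpleGraph

variable {G H : SimpleGraph V} (wt : Sym2 V → NNReal)

lemma walkWeight_cons {u v w : V} (h : G.Adj u v) (p : G.Walk v w) :
    walkWeight wt (Walk.cons h p) = wt s(u, v) + walkWeight wt p := by
  simp [walkWeight]

lemma walkWeight_append {u v w : V} (p : G.Walk u v) (q : G.Walk v w) :
    walkWeight wt (p.append q) = walkWeight wt p + walkWeight wt q := by
  simp [walkWeight]

lemma walkWeight_reverse {u v : V} (p : G.Walk u v) :
    walkWeight wt p.reverse = walkWeight wt p := by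
  simp [walkWeight, List.sum_reverse]

lemma walkWeight_transfer {u v : V} (p : G.Walk u v) (hp : ∀ e ∈ p.edges, e ∈ H.edgeSet) :
    walkWeight wt (p.transfer H hp) = walkWeight wt p := by
  simp [walkWeight, Walk.edges_transfer]

lemma walkWeight_bypass_le [DecidableEq V] {u v : V} (p : G.Walk u v) :
    walkWeight wt p.bypass ≤ walkWeight wt p :=
  (p.edges_bypass_sublist_edges.map _).sum_le_sum fun _ _ => zero_le

lemma wdist_le_walkWeight {u v : V} (p : G.Walk u v) : wdist G wt u v ≤ walkWeight wt p :=
  iInf_le _ p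

lemma wdist_self (u : V) : wdist G wt u u = 0 :=
  nonpos_iff_eq_zero.mp <| (wdist_le_walkWeight wt Walk.nil).trans_eq (by simp [walkWeight])

lemma wdist_comm (u v : V) : wdist G wt u v = wdist G wt v u := by
  have key (a b : V) : wdist G wt a b ≤ wdist G wt b a :=
    le_iInf fun p => (wdist_le_walkWeight wt p.reverse).trans_eq (walkWeight_reverse wt p)
  exact le_antisymm (key u v) (key v u)

lemma wdist_eq_of_sym2_eq {a b c d : V} (h : s(a, b) = s(c, d)) :
    wdist G wt a b = wdist G wt c d := by
  rcases Sym2.eq_iff.mp h with ⟨rfl, rfl⟩ | ⟨rfl, rfl⟩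
  · rfl
  · exact wdist_comm wt _ _

lemma wdist_triangle (u v w : V) : wdist G wt u w ≤ wdist G wt u v + wdist G wt v w := by
  simp only [wdist, ENNReal.iInf_add, ENNReal.add_iInf]
  exact le_iInf₂ fun q p =>
    (wdist_le_walkWeight wt (p.append q)).trans_eq (walkWeight_append wt p q)

lemma wdist_le_wt_add {u v w : V} (h : G.Adj u v) :
    wdist G wt u w ≤ wt s(u, v) + wdist G wt v w := by
  simp only [wdist, ENNReal.add_iInf]
  exact le_iInf fun p => (wdist_le_walkWeight wt (Walk.cons h p)).trans_eq (walkWeight_cons wt h p)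

lemma wdist_anti (hGH : G ≤ H) (u v : V) : wdist H wt u v ≤ wdist G wt u v :=
  le_iInf fun p => (wdist_le_walkWeight wt (p.mapLe hGH)).trans_eq <| by
    simp [walkWeight]

lemma wdist_deleteEdge_le_walkWeight {f : Sym2 V} {u v : V} (p : G.Walk u v)
    (hf : f ∉ p.edges) : wdist (G.deleteEdges {f}) wt u v ≤ walkWeight wt p :=
  (wdist_le_walkWeight wt (p.toDeleteEdge f hf)).trans_eq (walkWeight_transfer wt p _)

end

namespace SimpleGraph.Walk

variable {G : SimpleGraph V} (wt : Sym2 V → NNReal)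

lemma isPath_of_walkWeight_eq_wdist (huniq : HasUniqueShortestPaths G wt) {u v : V}
    {p : G.Walk u v} (hp : walkWeight wt p = wdist G wt u v) : p.IsPath := by
  classical
  obtain ⟨_, _, hunique⟩ := huniq u v p.reachable
  have hbypass : walkWeight wt p.bypass = wdist G wt u v :=
    le_antisymm ((walkWeight_bypass_le wt p).trans_eq hp) (wdist_le_walkWeight wt _)
  rw [(hunique p hp).trans (hunique _ hbypass).symm]
  exact p.bypass_isPath

lemma IsTrail.exists_wdist_deleteEdge_add_le {f : Sym2 V} {u z : V} {p : G.Walk u z}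
    (hp : p.IsTrail) (hf : f ∈ p.edges) :
    ∃ c d, f = s(c, d) ∧
      wdist (G.deleteEdges {f}) wt u c + wdist (G.deleteEdges {f}) wt d z ≤ walkWeight wt p := by
  induction p with
  | nil => simp at hf
  | @cons a b z h q ih =>
    rw [isTrail_cons] at hp
    rw [walkWeight_cons]
    by_cases hab : s(a, b) = f
    · refine ⟨a, b, hab.symm, ?_⟩
      rw [wdist_self, zero_add]
      exact (wdist_deleteEdge_le_walkWeight wt q (hab ▸ hp.2)).trans le_add_self
    · obtain ⟨c, d, hcd, hle⟩ := ih hp.1 (by simpa [Ne.symm hab] using hf)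
      have h' : (G.deleteEdges {f}).Adj a b := by simpa using ⟨h, hab⟩
      refine ⟨c, d, hcd, ?_⟩
      calc _ ≤ wt s(a, b) + wdist (G.deleteEdges {f}) wt b c +
              wdist (G.deleteEdges {f}) wt d z := by gcongr; exact wdist_le_wt_add wt h'
        _ ≤ _ := by rw [add_assoc]; gcongr

lemma IsTrail.wdist_deleteEdge_endpoints_le {f : Sym2 V} {a b u z : V} {p : G.Walk u z}
    (hp : p.IsTrail) (hf : f ∈ p.edges) (hab : f = s(a, b)) :
    wdist (G.deleteEdges {f}) wt a b ≤ walkWeight wt p + wdist (G.deleteEdges {f}) wt u z := by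
  obtain ⟨c, d, hcd, hle⟩ := hp.exists_wdist_deleteEdge_add_le wt hf
  rw [wdist_eq_of_sym2_eq wt (hab.symm.trans hcd)]
  calc _ ≤ wdist (G.deleteEdges {f}) wt c u + wdist (G.deleteEdges {f}) wt u z +
          wdist (G.deleteEdges {f}) wt z d :=
        (wdist_triangle wt _ z _).trans (by gcongr; exact wdist_triangle wt _ _ _)
    _ = (wdist (G.deleteEdges {f}) wt u c + wdist (G.deleteEdges {f}) wt d z) +
          wdist (G.deleteEdges {f}) wt u z := by
        rw [wdist_comm wt c, wdist_comm wt z]; ring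
    _ ≤ _ := by gcongr

lemma IsTrail.wdist_deleteEdge_le_walkWeight_add {f : Sym2 V} {u z : V} {p : G.Walk u z}
    (hp : p.IsTrail) (hf : f ∈ p.edges) {K : ℝ≥0∞}
    (hK : ∀ a b, f = s(a, b) → wdist (G.deleteEdges {f}) wt a b ≤ K) :
    wdist (G.deleteEdges {f}) wt u z ≤ walkWeight wt p + K := by
  obtain ⟨c, d, hcd, hle⟩ := hp.exists_wdist_deleteEdge_add_le wt hf
  calc _ ≤ wdist (G.deleteEdges {f}) wt u c + wdist (G.deleteEdges {f}) wt c d +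
          wdist (G.deleteEdges {f}) wt d z :=
        (wdist_triangle wt _ d _).trans (by gcongr; exact wdist_triangle wt _ _ _)
    _ ≤ wdist (G.deleteEdges {f}) wt u c + K + wdist (G.deleteEdges {f}) wt d z := by
        gcongr; exact hK c d hcd
    _ = (wdist (G.deleteEdges {f}) wt u c + wdist (G.deleteEdges {f}) wt d z) + K := by ring
    _ ≤ _ := by gcongr

end SimpleGraph.Walk

theorem stmt16_general (G : SimpleGraph V) (wt : Sym2 V → NNReal)
    (huniq : HasUniqueShortestPaths G wt)
    (s v x y : V)
    (hvx : wdist G wt v x ≤ wdist G wt s v)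
    (hxy : wdist G wt x y ≤ 2 * wdist G wt s v)
    (hys : wdist G wt y s ≤ 4 * wdist G wt s v)
    (f : Sym2 V)
    (qsv : G.Walk s v) (hqsv : walkWeight wt qsv = wdist G wt s v)
    (qvx : G.Walk v x) (hqvx : walkWeight wt qvx = wdist G wt v x)
    (qxy : G.Walk x y) (hqxy : walkWeight wt qxy = wdist G wt x y)
    (qys : G.Walk y s) (hqys : walkWeight wt qys = wdist G wt y s)
    (hf1 : f ∈ qsv.edges) (hf2 : f ∈ qvx.edges)
    (hf3 : f ∉ qxy.edges) (hf4 : f ∈ qys.edges) :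
    wdist (G.deleteEdges {f}) wt v x + wdist (G.deleteEdges {f}) wt x y +
        wdist (G.deleteEdges {f}) wt y s ≤
      11 * wdist (G.deleteEdges {f}) wt s v := by
  set D := wdist G wt s v
  set D' := wdist (G.deleteEdges {f}) wt s v
  have hDD' : D ≤ D' := wdist_anti wt (G.deleteEdges_le {f}) s v
  have hK (a b : V) (hab : f = s(a, b)) : wdist (G.deleteEdges {f}) wt a b ≤ D + D' :=
    hqsv ▸ ((SimpleGraph.Walk.isPath_of_walkWeight_eq_wdist wt huniq hqsv).isTrail
      |>.wdist_deleteEdge_endpoints_le wt hf1 hab)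
  have hthrough {u z : V} {p : G.Walk u z} (hp : walkWeight wt p = wdist G wt u z)
      (hf : f ∈ p.edges) : wdist (G.deleteEdges {f}) wt u z ≤ wdist G wt u z + (D + D') :=
    hp ▸ ((SimpleGraph.Walk.isPath_of_walkWeight_eq_wdist wt huniq hp).isTrail
      |>.wdist_deleteEdge_le_walkWeight_add wt hf hK)
  have hxy' : wdist (G.deleteEdges {f}) wt x y ≤ 2 * D :=
    (wdist_deleteEdge_le_walkWeight wt qxy hf3).trans (hqxy ▸ hxy)
  calc _ ≤ (D + (D + D')) + 2 * D + (4 * D + (D + D')) := by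
        gcongr
        · exact (hthrough hqvx hf2).trans (by gcongr)
        · exact (hthrough hqys hf4).trans (by gcongr)
    _ = 9 * D + 2 * D' := by ring
    _ ≤ 9 * D' + 2 * D' := by gcongr
    _ = 11 * D' := by ring

theorem stmt16 [Fintype V] [DecidableEq V] (G : SimpleGraph V) (wt : Sym2 V → NNReal)
    (hwt : ∀ e ∈ G.edgeSet, 0 < wt e)
    (huniq : HasUniqueShortestPaths G wt)
    (s v x y : V)
    (hvx : wdist G wt v x ≤ wdist G wt s v)
    (hxy : wdist G wt x y ≤ 2 * wdist G wt s v)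
    (hys : wdist G wt y s ≤ 4 * wdist G wt s v)
    (f : Sym2 V) (hf : f ∈ G.edgeSet)
    (hconn : (G.deleteEdges {f}).Reachable s v)
    (qsv : G.Walk s v) (hqsv : walkWeight wt qsv = wdist G wt s v)
    (qvx : G.Walk v x) (hqvx : walkWeight wt qvx = wdist G wt v x)
    (qxy : G.Walk x y) (hqxy : walkWeight wt qxy = wdist G wt x y)
    (qys : G.Walk y s) (hqys : walkWeight wt qys = wdist G wt y s)
    (hf1 : f ∈ qsv.edges) (hf2 : f ∈ qvx.edges)
    (hf3 : f ∉ qxy.edges) (hf4 : f ∈ qys.edges) :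
    wdist (G.deleteEdges {f}) wt v x + wdist (G.deleteEdges {f}) wt x y +
        wdist (G.deleteEdges {f}) wt y s ≤
      11 * wdist (G.deleteEdges {f}) wt s v :=
  stmt16_general G wt huniq s v x y hvx hxy hys f qsv hqsv qvx hqvx qxy hqxy qys hqys hf1 hf2 hf3
    hf4
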